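/- Let $A$ be a 1-form on a manifold $M$ and let $\Omega$ be a closed 3-form. Define $K(\omega) = u\,A \wedge f(u\,dA)\wedge\omega$ where $f(x) = \frac{e^x - 1}{x} = \sum_{k\geq 0}\frac{x^k}{(k+1)!}$. Then for every $\omega \in \Omega^*(M)((u))$, $(d - u\Omega)(K\omega) + K((d - u\Omega)\omega) = e^{u\,dA}\wedge\omega - \omega$. In particular, multiplication by $e^{u\,dA}$ is chain homotopic to the identity on the twisted de Rham complex $(\Omega^*(M)((u)), d - u\Omega\wedge\cdot)$. -/
import Mathlib

private lemma pow_comm_apply' {V : Type*} [AddCommGroup V] [Module ℂ V]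
    (g h : V →ₗ[ℂ] V) (hc : ∀ v, g (h v) = h (g v)) (k : ℕ) (v : V) :
    g ((h ^ k) v) = (h ^ k) (g v) := by
  induction k generalizing v with
  | zero => simp
  | succ k ih =>
    rw [pow_succ, Module.End.mul_apply, Module.End.mul_apply, ih, hc]

theorem exp_u_dA_chain_homotopic_to_id
    {V : Type*} [AddCommGroup V] [Module ℂ V]
    (d wA wdA wO : V →ₗ[ℂ] V)
    (hd : ∀ v, d (d v) = 0)
    (hAA : ∀ v, wA (wA v) = 0)
    (hdA : ∀ v, d (wA v) = wdA v - wA (d v))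
    (hddA : ∀ v, d (wdA v) = wdA (d v))
    (hOd : ∀ v, d (wO v) = - wO (d v))
    (hOA : ∀ v, wO (wA v) = - wA (wO v))
    (hOdA : ∀ v, wO (wdA v) = wdA (wO v))
    (hAdA : ∀ v, wA (wdA v) = wdA (wA v))
    (D : (ℤ → V) → (ℤ → V))
    (hD : ∀ f n, D f n = d (f n) - wO (f (n - 1)))
    (K : (ℤ → V) → (ℤ → V))
    (hK : ∀ f n, K f n = ∑ᶠ k : ℕ,
      (((k + 1).factorial : ℂ))⁻¹ • wA ((wdA ^ k) (f (n - 1 - k))))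
    (E : (ℤ → V) → (ℤ → V))
    (hE : ∀ f n, E f n = ∑ᶠ k : ℕ, ((k.factorial : ℂ))⁻¹ • ((wdA ^ k) (f (n - k)))) :
    ∀ f : ℤ → V, (∃ N : ℤ, ∀ n < N, f n = 0) →
      ∀ n : ℤ, D (K f) n + K (D f) n = E f n - f n := by
  rintro f ⟨N, hN⟩ n
  set M : ℕ := (n - N).toNat + 1 with hM
  have key : ∀ (M' : ℕ) (g : ℕ → V), (∀ k, M' ≤ k → g k = 0) →
      ∑ᶠ k, g k = ∑ k ∈ Finset.range M', g k := by
    intro M' g hg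
    apply finsum_eq_finset_sum_of_support_subset
    intro k hk
    simp only [Function.mem_support] at hk
    simp only [Finset.coe_range, Set.mem_Iio]
    by_contra h
    exact hk (hg k (le_of_not_gt h))
  have e1 : K f n = ∑ k ∈ Finset.range M,
      (((k + 1).factorial : ℂ))⁻¹ • wA ((wdA ^ k) (f (n - 1 - k))) := by
    rw [hK]
    apply key
    intro k hk
    rw [hN (n - 1 - k) (by omega), map_zero, map_zero, smul_zero]
  have e2 : K f (n - 1) = ∑ k ∈ Finset.range M,
      (((k + 1).factorial : ℂ))⁻¹ • wA ((wdA ^ k) (f (n - 1 - 1 - k))) := by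
    rw [hK]
    apply key
    intro k hk
    rw [hN (n - 1 - 1 - k) (by omega), map_zero, map_zero, smul_zero]
  have e3 : K (D f) n = ∑ k ∈ Finset.range M,
      (((k + 1).factorial : ℂ))⁻¹ • wA ((wdA ^ k) (D f (n - 1 - k))) := by
    rw [hK]
    apply key
    intro k hk
    rw [hD, hN (n - 1 - k) (by omega), hN (n - 1 - k - 1) (by omega)]
    simp
  have e4 : E f n = ∑ k ∈ Finset.range (M + 1),
      ((k.factorial : ℂ))⁻¹ • ((wdA ^ k) (f (n - k))) := by
    rw [hE]
    apply key
    intro k hk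
    rw [hN (n - k) (by omega), map_zero, smul_zero]
  have lhs_eq : d (K f n) - wO (K f (n - 1)) + K (D f) n =
      ∑ k ∈ Finset.range M,
        (((k + 1).factorial : ℂ))⁻¹ • ((wdA ^ (k + 1)) (f (n - 1 - k))) := by
    rw [e1, e2, e3, map_sum, map_sum, ← Finset.sum_sub_distrib, ← Finset.sum_add_distrib]
    apply Finset.sum_congr rfl
    intro k _
    rw [map_smul, map_smul, hD]
    have harg : n - 1 - 1 - (k : ℤ) = n - 1 - k - 1 := by ring
    rw [harg]
    rw [hdA, hOA, map_sub, map_sub,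
      pow_comm_apply' d wdA hddA, pow_comm_apply' wO wdA hOdA,
      pow_succ', Module.End.mul_apply]
    module
  have rhs_eq : E f n - f n =
      ∑ k ∈ Finset.range M,
        (((k + 1).factorial : ℂ))⁻¹ • ((wdA ^ (k + 1)) (f (n - 1 - k))) := by
    rw [e4, Finset.sum_range_succ']
    simp only [pow_zero, Module.End.one_apply, Nat.factorial_zero, Nat.cast_one, inv_one,
      one_smul, Nat.cast_zero, sub_zero]
    rw [add_sub_cancel_right]
    apply Finset.sum_congr rfl
    intro k _
    congr 1
    push_cast
    ring_nf
  rw [hD, lhs_eq, rhs_eq]
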